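/- If a partition λ of m satisfies pet_k(λ) ≠ 0 (k ≥ 1), then λ_1 < k and the k-core of λ equals (d), where d is the remainder of m modulo k (interpreted as the empty partition when d = 0). -/

import Mathlib

open scoped Classical

namespace Petrie

/-- An integer partition, encoded as a weakly decreasing, eventually zero
function `ℕ → ℕ` (0-indexed parts: `parts i` is the `(i+1)`-st part). -/
structure Partition where
  parts : ℕ → ℕ
  antitone : ∀ ⦃i j : ℕ⦄, i ≤ j → parts j ≤ parts i
  fin_supp : ∃ N, ∀ i, N ≤ i → parts i = 0

/-- The size `|λ|` of a partition. -/
noncomputable def psize (l : Partition) : ℕ := ∑ᶠ i, l.parts i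

/-- The number of (nonzero) parts of a partition. -/
noncomputable def length (l : Partition) : ℕ := sInf {i | l.parts i = 0}

/-- The partition whose parts are given by a weakly decreasing list `L`
(of its nonzero entries, possibly padded by zeros). -/
noncomputable def ofList (L : List ℕ) : Partition where
  parts := fun i => (L.drop i).foldr max 0
  antitone := by
    have step : ∀ (M : List ℕ) (i : ℕ),
        (M.drop (i+1)).foldr max 0 ≤ (M.drop i).foldr max 0 := by
      intro M
      induction M with
      | nil => intro i; simp
      | cons a t ih =>
        intro i
        cases i with
        | zero =>
          simp only [List.drop_succ_cons, List.drop_zero, List.foldr_cons]; exact le_max_right a (t.foldr max 0)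
        | succ n => simpa using ih n
    intro i j hij
    induction j, hij using Nat.le_induction with
    | base => exact le_rfl
    | succ n hn ih => exact (step L n).trans ih
  fin_supp := ⟨L.length, by intro i hi; simp [List.drop_eq_nil_of_le hi]⟩

/-- The conjugate (transpose) partition. -/
noncomputable def conj (l : Partition) : Partition where
  parts := fun i => sInf {n | l.parts n ≤ i}
  antitone := by
    intro i j hij
    obtain ⟨N, hN⟩ := l.fin_supp
    refine csInf_le_csInf (OrderBot.bddBelow _) ⟨N, ?_⟩ ?_
    · simp [hN N le_rfl]
    · intro n hn
      exact le_trans hn hij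
  fin_supp := by
    refine ⟨l.parts 0, fun i hi => ?_⟩
    exact Nat.sInf_eq_zero.mpr (Or.inl (le_trans (l.antitone (Nat.zero_le 0)) hi))

/-- The `k`-Petrie number `pet_k(λ) = det[χ(0 ≤ λ_i - i + j < k)]_{i,j=1}^{ℓ(λ)}`. -/
noncomputable def pet (k : ℕ) (l : Partition) : ℤ :=
  Matrix.det (Matrix.of fun i j : Fin (length l) =>
    if (0:ℤ) ≤ (l.parts i : ℤ) - (i:ℕ) + (j:ℕ) ∧ (l.parts i : ℤ) - (i:ℕ) + (j:ℕ) < k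
    then 1 else 0)

/-- The cells of the skew diagram `λ/μ` (rows and columns 0-indexed). -/
def cells (la mu : Partition) : Set (ℕ × ℕ) :=
  {c | mu.parts c.1 ≤ c.2 ∧ c.2 < la.parts c.1}

/-- Rookwise adjacency of two cells. -/
def Adj (c d : ℕ × ℕ) : Prop :=
  (c.1 = d.1 ∧ (c.2 + 1 = d.2 ∨ d.2 + 1 = c.2)) ∨
  (c.2 = d.2 ∧ (c.1 + 1 = d.1 ∨ d.1 + 1 = c.1))

/-- `λ/μ` is a rim hook (border strip) of size `k`: `μ ⊆ λ`, the skew diagram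
has `k` cells, is rookwise connected, and contains no 2×2 square. -/
def IsRimHook (la mu : Partition) (k : ℕ) : Prop :=
  (∀ i, mu.parts i ≤ la.parts i) ∧
  (∑ᶠ i, (la.parts i - mu.parts i)) = k ∧
  (∀ c ∈ cells la mu, ∀ d ∈ cells la mu,
    Relation.ReflTransGen (fun a b => a ∈ cells la mu ∧ b ∈ cells la mu ∧ Adj a b) c d) ∧
  ¬ ∃ i j : ℕ, (i, j) ∈ cells la mu ∧ (i+1, j) ∈ cells la mu ∧
      (i, j+1) ∈ cells la mu ∧ (i+1, j+1) ∈ cells la mu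

/-- The height of a skew shape `λ/μ`: one less than its number of rows. -/
noncomputable def height (la mu : Partition) : ℕ :=
  Set.ncard {i | mu.parts i < la.parts i} - 1

/-- The number of columns of the skew diagram `λ/μ`. -/
noncomputable def cols (la mu : Partition) : ℕ :=
  Set.ncard {j | ∃ i, (i, j) ∈ cells la mu}

/-- `c` is the `k`-core of `λ`: it is obtained from `λ` by successively removing
rim hooks of size `k`, and no further rim hook of size `k` can be removed. -/
def IsCore (k : ℕ) (la c : Partition) : Prop :=
  Relation.ReflTransGen (fun a b => IsRimHook a b k) la c ∧ ∀ b, ¬ IsRimHook c b k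

/-- Dominance order: `Dominates μ λ` means `λ ⊴ μ`. -/
def Dominates (mu la : Partition) : Prop :=
  ∀ r, ∑ i ∈ Finset.range r, la.parts i ≤ ∑ i ∈ Finset.range r, mu.parts i

/-! ### Symmetric functions, realized as formal power series in countably
many variables `x_0, x_1, x_2, …`. -/

/-- The ring of formal power series in the variables `x_i`, `i : ℕ`. -/
abbrev SymFn := MvPowerSeries ℕ ℤ

/-- The total degree of an exponent vector. -/
noncomputable def degree (d : ℕ →₀ ℕ) : ℕ := d.sum fun _ e => e

/-- The complete homogeneous symmetric function `h_m`. -/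
noncomputable def hfun (m : ℕ) : SymFn := fun d => if degree d = m then 1 else 0

/-- `h_n` for an integer index (`0` for negative `n`). -/
noncomputable def hz (n : ℤ) : SymFn := if 0 ≤ n then hfun n.toNat else 0

/-- The elementary symmetric function `e_m`. -/
noncomputable def esymmF (m : ℕ) : SymFn :=
  fun d => if degree d = m ∧ ∀ i, d i ≤ 1 then 1 else 0

/-- The power sum symmetric function `p_n = Σ_i x_i^n`. -/
noncomputable def psumF (n : ℕ) : SymFn :=
  fun d => if ∃ i, d = Finsupp.single i n then 1 else 0

/-- The Petrie symmetric function `G(k,m)`, i.e. the degree-`m` part of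
`Π_i (1 + x_i + x_i^2 + ⋯ + x_i^{k-1})`. -/
noncomputable def G (k m : ℕ) : SymFn :=
  fun d => if degree d = m ∧ ∀ i, d i < k then 1 else 0

/-- The monomial symmetric function `m_λ`. -/
noncomputable def msym (l : Partition) : SymFn :=
  fun d => if Multiset.map (fun i => d i) d.support.val =
      Multiset.map l.parts (Multiset.range (length l)) then 1 else 0

/-- The Schur function `s_λ`, via the Jacobi–Trudi determinant
`s_λ = det[h_{λ_i - i + j}]_{i,j=1}^{ℓ(λ)}`. -/
noncomputable def schur (l : Partition) : SymFn :=
  Matrix.det (Matrix.of fun i j : Fin (length l) =>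
    hz ((l.parts i : ℤ) - (i:ℕ) + (j:ℕ)))

/-- The representative in `{1, …, k}` of `x` modulo `k`. -/
noncomputable def resid (k : ℕ) (x : ℤ) : ℤ := if x % (k:ℤ) = 0 then (k:ℤ) else x % (k:ℤ)

/-- `β_i = λᶜ_i - i` (1-indexed `i`). -/
noncomputable def betaSeq (l : Partition) (i : ℕ) : ℤ := ((conj l).parts (i-1) : ℤ) - (i:ℤ)

/-- `γ_i ∈ {1, …, k}`, `γ_i ≡ λᶜ_i - i (mod k)` (1-indexed `i`). -/
noncomputable def gammaSeq (k : ℕ) (l : Partition) (i : ℕ) : ℤ := resid k (betaSeq l i)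

/-- The number of non-inversions of the sequence `γ_1, …, γ_{k-1}`. -/
noncomputable def ninv (k : ℕ) (g : ℕ → ℤ) : ℕ :=
  (((Finset.Icc 1 (k-1)) ×ˢ (Finset.Icc 1 (k-1))).filter
    (fun p => p.1 < p.2 ∧ g p.1 < g p.2)).card

/-!
Encode `λ` by its Maya diagram, the set of bead positions `β_t = λ_t - t - 1`. Row `i` of the
matrix defining `pet_k(λ)` is the indicator of the columns `j` whose position `-j - 1` lies in
the window `(β_i - k, β_i]`. If two gaps `g' < g ≤ k - 2` of the diagram were congruent mod `k`,
the discrete derivative of the indicator of `{g', g' + k, …, g - k}` would be a nonzero kernel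
vector: against every window it telescopes to zero. So `pet_k(λ) ≠ 0` forces `λ_1 < k` and the
gaps below `k - 1` to lie in distinct classes mod `k`.

Removing a `k`-rim hook slides a bead from some `b` to the gap `b - k`, and preserves this
property. When no bead can slide, every position `≤ -2` carries a bead, so `λ` is a single row,
of length `< k`, i.e. `|λ| mod k`.
-/

open scoped Matrix

theorem _root_.Int.ModEq.add_le_of_lt {n a b : ℤ} (h : a ≡ b [ZMOD n]) (hab : a < b) :
    a + n ≤ b := by
  have := Int.le_of_dvd (by omega) h.dvd
  omega

theorem sum_range_window_eq_max (f : ℤ → ℤ) (L : ℕ) {lo hi : ℤ} (hlo : lo ≤ hi)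
    (hhi : hi ≤ -1) :
    ∑ j ∈ Finset.range L,
        (if lo < -(j : ℤ) - 1 ∧ -(j : ℤ) - 1 ≤ hi then f (-j - 1) - f (-j - 2) else 0) =
      f (max hi (-L - 1)) - f (max lo (-L - 1)) := by
  induction L with
  | zero => simp [max_eq_right hhi, max_eq_right (hlo.trans hhi)]
  | succ L ih =>
    rw [Finset.sum_range_succ, ih]
    push_cast
    split_ifs with h
    · simp (disch := omega) only [max_eq_left, max_eq_right]
      ring_nf
    · rcases not_and_or.mp h with h | h <;>
        simp (disch := omega) only [max_eq_left, max_eq_right, add_zero, sub_self]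

theorem sum_range_window (f : ℤ → ℤ) {L : ℕ} (hf : ∀ c < -(L : ℤ), f c = 0) {lo hi : ℤ}
    (hlo : lo ≤ hi) (hhi : hi ≤ -1) :
    ∑ j ∈ Finset.range L,
        (if lo < -(j : ℤ) - 1 ∧ -(j : ℤ) - 1 ≤ hi then f (-j - 1) - f (-j - 2) else 0) =
      f hi - f lo := by
  have hmax : ∀ c, f (max c (-L - 1)) = f c := fun c => by
    rcases le_total c (-L - 1) with h | h
    · rw [max_eq_right h, hf _ (by omega), hf _ (by omega)]
    · rw [max_eq_left h]
  rw [sum_range_window_eq_max f L hlo hhi, hmax, hmax]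

theorem _root_.StrictAnti.apply_add_eq_sub {b : ℕ → ℤ} (hb : StrictAnti b) {t₀ : ℕ}
    (hsurj : ∀ c ≤ b t₀, c ∈ Set.range b) (n : ℕ) : b (t₀ + n) = b t₀ - n := by
  induction n with
  | zero => simp
  | succ n ih =>
    obtain ⟨s, hs⟩ := hsurj (b t₀ - n - 1) (by omega)
    have hlt : t₀ + n < s := hb.lt_iff_gt.mp (by omega)
    have h1 := hb (by omega : t₀ + n < t₀ + n + 1)
    have h2 : b s ≤ b (t₀ + n + 1) := hb.antitone hlt
    rw [← add_assoc, Nat.cast_succ]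
    omega

namespace Partition

@[ext]
theorem ext {a b : Partition} (h : a.parts = b.parts) : a = b := by
  cases a; cases b; congr

variable (l : Partition)

theorem parts_eq_zero_of_length_le {t : ℕ} (h : length l ≤ t) : l.parts t = 0 := by
  obtain ⟨N, hN⟩ := l.fin_supp
  have := Nat.sInf_mem (s := {i | l.parts i = 0}) ⟨N, hN N le_rfl⟩
  exact Nat.le_zero.mp ((l.antitone h).trans_eq this)

def bead (t : ℕ) : ℤ := l.parts t - t - 1

def beads : Set ℤ := Set.range l.bead

theorem strictAnti_bead : StrictAnti l.bead :=
  strictAnti_nat_of_succ_lt fun t => by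
    have := l.antitone (Nat.le_add_right t 1)
    simp only [bead]
    push_cast
    omega

theorem bead_le (t : ℕ) : l.bead t ≤ l.parts 0 - t - 1 := by
  have := l.antitone t.zero_le
  simp only [bead]
  omega

theorem bead_of_length_le {t : ℕ} (h : length l ≤ t) : l.bead t = -t - 1 := by
  simp [bead, l.parts_eq_zero_of_length_le h]

theorem mem_beads_of_lt {c : ℤ} (hc : c < -length l) : c ∈ l.beads :=
  ⟨(-c - 1).toNat, by rw [bead_of_length_le _ (by omega)]; omega⟩

theorem neg_length_le_of_notMem_beads {c : ℤ} (hc : c ∉ l.beads) : -(length l : ℤ) ≤ c :=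
  not_lt.mp fun h => hc (l.mem_beads_of_lt h)

end Partition

def petMatrix (k : ℕ) (l : Partition) : Matrix (Fin (length l)) (Fin (length l)) ℤ :=
  Matrix.of fun i j =>
    if (0:ℤ) ≤ (l.parts i : ℤ) - (i:ℕ) + (j:ℕ) ∧ (l.parts i : ℤ) - (i:ℕ) + (j:ℕ) < k
    then 1 else 0

theorem pet_eq_det_petMatrix (k : ℕ) (l : Partition) : pet k l = (petMatrix k l).det := rfl

theorem petMatrix_apply (k : ℕ) (l : Partition) (i j : Fin (length l)) :
    petMatrix k l i j =
      if l.bead i - k < -((j : ℕ) : ℤ) - 1 ∧ -((j : ℕ) : ℤ) - 1 ≤ l.bead i then 1 else 0 := by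
  simp only [petMatrix, Matrix.of_apply, Partition.bead]
  congr 1
  apply propext
  omega

theorem parts_zero_lt_of_pet_ne_zero {k : ℕ} {l : Partition} (hk : 1 ≤ k) (h : pet k l ≠ 0) :
    l.parts 0 < k := by
  by_contra hlk
  have hL : 0 < length l := Nat.pos_of_ne_zero fun hL => by
    have := l.parts_eq_zero_of_length_le hL.le
    omega
  refine h (Matrix.det_eq_zero_of_row_eq_zero ⟨0, hL⟩ fun j => ?_)
  rw [Matrix.of_apply, if_neg]
  simp only [Nat.cast_zero, sub_zero]
  omega

theorem petMatrix_mulVec_apply {k : ℕ} {l : Partition} (hk : l.parts 0 < k) (f : ℤ → ℤ)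
    (hf : ∀ c < -(length l : ℤ), f c = 0) (i : Fin (length l)) :
    (petMatrix k l *ᵥ fun j => f (-((j : ℕ) : ℤ) - 1) - f (-((j : ℕ) : ℤ) - 2)) i =
      f (min (l.bead i) (-1)) - f (l.bead i - k) := by
  have hb := l.bead_le i
  rw [← sum_range_window f hf (by omega) (min_le_right _ _), Finset.sum_range,
    Matrix.mulVec, dotProduct]
  refine Finset.sum_congr rfl fun j _ => ?_
  rw [petMatrix_apply]
  split_ifs <;> first | (exfalso; omega) | simp

theorem pet_eq_zero_of_modEq {k : ℕ} {l : Partition} (hk : l.parts 0 < k) {g g' : ℤ}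
    (hg : g ∉ l.beads) (hg' : g' ∉ l.beads) (hgk : g ≤ k - 2) (hlt : g' < g)
    (hmod : g' ≡ g [ZMOD k]) : pet k l = 0 := by
  let f : ℤ → ℤ := fun c => if g' ≤ c ∧ c < g ∧ c ≡ g' [ZMOD k] then 1 else 0
  have hL := l.neg_length_le_of_notMem_beads hg'
  have hg'k := hmod.add_le_of_lt hlt
  have hlow : ∀ c < -(length l : ℤ), f c = 0 := fun c hc => if_neg (by omega)
  have hhigh : ∀ c, -1 ≤ c → f c = 0 := fun c hc => if_neg fun ⟨_, hcg, hc'⟩ => by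
    have := (hc'.trans hmod).add_le_of_lt hcg
    omega
  have hshift : ∀ b ∈ l.beads, f b = f (b - k) := by
    intro b hb
    have hbg : b ≠ g := by rintro rfl; exact hg hb
    have hbg' : b ≠ g' := by rintro rfl; exact hg' hb
    simp only [f, Int.sub_modulus_modEq_iff]
    by_cases hbm : b ≡ g' [ZMOD k]
    · have h1 : g' < b → g' + k ≤ b := hbm.symm.add_le_of_lt
      have h2 : g < b → g + k ≤ b := (hmod.symm.trans hbm.symm).add_le_of_lt
      simp only [hbm, and_true]
      split_ifs <;> omega
    · simp only [hbm, and_false, if_false]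
  let z : Fin (length l) → ℤ := fun j => f (-((j : ℕ) : ℤ) - 1) - f (-((j : ℕ) : ℤ) - 2)
  have hrow : ∀ i, (petMatrix k l *ᵥ z) i = 0 := fun i => by
    refine (petMatrix_mulVec_apply hk f hlow i).trans ?_
    rw [← hshift _ ⟨i, rfl⟩, sub_eq_zero]
    rcases le_total (l.bead i) (-1) with h | h
    · rw [min_eq_left h]
    · rw [min_eq_right h, hhigh _ le_rfl, hhigh _ h]
  have hz : z ≠ 0 := by
    intro hz
    have hj : -(((-g' - 1).toNat : ℕ) : ℤ) - 1 = g' := by omega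
    have hj' : -(((-g' - 1).toNat : ℕ) : ℤ) - 2 = g' - 1 := by omega
    have := congr_fun hz ⟨(-g' - 1).toNat, by omega⟩
    simp only [z, f, Pi.zero_apply, hj, hj'] at this
    rw [if_pos ⟨le_rfl, hlt, Int.ModEq.refl _⟩, if_neg (by omega)] at this
    omega
  rw [pet_eq_det_petMatrix]
  exact Matrix.exists_mulVec_eq_zero_iff.mp ⟨z, hz, funext hrow⟩

def GapsIncongruent (k : ℕ) (B : Set ℤ) : Prop :=
  ∀ g ∉ B, ∀ g' ∉ B, g ≤ k - 2 → g' ≤ k - 2 → g ≡ g' [ZMOD k] → g = g'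

theorem gapsIncongruent_of_pet_ne_zero {k : ℕ} {l : Partition} (hk : l.parts 0 < k)
    (h : pet k l ≠ 0) : GapsIncongruent k l.beads := by
  intro g hg g' hg' hgk hg'k hmod
  by_contra hne
  rcases lt_or_gt_of_ne hne with hlt | hlt
  · exact h (pet_eq_zero_of_modEq hk hg' hg hg'k hlt hmod)
  · exact h (pet_eq_zero_of_modEq hk hg hg' hgk hlt hmod.symm)

/-- Moving a bead from `c + k` down to the gap `c` preserves the property. -/
theorem GapsIncongruent.of_subset_insert {k : ℕ} {B B' : Set ℤ} {c : ℤ}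
    (h : GapsIncongruent k B) (hsub : B ⊆ insert (c + k) B') (hc : c ∈ B') (hcB : c ∉ B)
    (hck : c ≤ k - 2) : GapsIncongruent k B' := by
  have hgap : ∀ g ∉ B', g ≠ c + k → g ∉ B := fun g hg hne hgB => (hsub hgB).elim hne hg
  have hmoved : ∀ g' ∉ B', g' ≤ k - 2 → c + k ≡ g' [ZMOD k] → g' = c + k :=
    fun g' hg' hg'k hmod => by_contra fun hne => hg' (h c hcB g' (hgap g' hg' hne) hck hg'k
      (Int.add_modulus_modEq_iff.mp hmod) ▸ hc)
  intro g hg g' hg' hgk hg'k hmod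
  by_cases hgc : g = c + k
  · rw [hgc, hmoved g' hg' hg'k (hgc ▸ hmod)]
  by_cases hg'c : g' = c + k
  · rw [hg'c, hmoved g hg hgk (hg'c ▸ hmod.symm)]
  exact h g (hgap g hg hgc) g' (hgap g' hg' hg'c) hgk hg'k hmod

theorem parts_one_eq_zero_of_sub_mem_beads {k : ℕ} (hk : 0 < k) {l : Partition}
    (hgaps : GapsIncongruent k l.beads) (hcore : ∀ b ∈ l.beads, b - k ∈ l.beads) :
    l.parts 1 = 0 := by
  have hIic : ∀ c ≤ -2, c ∈ l.beads := by
    intro c hc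
    by_contra hcB
    have hck : c + k ∉ l.beads := fun h => hcB (by simpa using hcore _ h)
    have := hgaps _ hck _ hcB (by omega) (by omega)
      (Int.add_modulus_modEq_iff.mpr (Int.ModEq.refl c))
    omega
  obtain ⟨t₀, ht₀⟩ := hIic (-2) le_rfl
  have hrun := l.strictAnti_bead.apply_add_eq_sub (t₀ := t₀) (ht₀ ▸ hIic) (length l)
  rw [ht₀, Partition.bead_of_length_le _ (by omega)] at hrun
  obtain rfl : t₀ = 1 := by push_cast at hrun; omega
  simp only [Partition.bead] at ht₀
  omega

theorem psize_eq_parts_zero {l : Partition} (h : l.parts 1 = 0) : psize l = l.parts 0 :=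
  finsum_eq_single _ 0 fun _ ht =>
    Nat.le_zero.mp ((l.antitone (Nat.one_le_iff_ne_zero.mpr ht)).trans_eq h)

theorem ofList_singleton_parts (d t : ℕ) : (ofList [d]).parts t = if t = 0 then d else 0 := by
  cases t <;> simp [ofList]

theorem psize_ofList_singleton (d : ℕ) : psize (ofList [d]) = d := by
  rw [psize_eq_parts_zero] <;> simp [ofList_singleton_parts]

theorem eq_ofList_singleton {l : Partition} (h : l.parts 1 = 0) : l = ofList [l.parts 0] := by
  ext t
  rw [ofList_singleton_parts]
  split_ifs with ht
  · rw [ht]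
  · exact Nat.le_zero.mp ((l.antitone (Nat.one_le_iff_ne_zero.mpr ht)).trans_eq h)

theorem IsRimHook.psize_eq {la mu : Partition} {k : ℕ} (h : IsRimHook la mu k) :
    psize la = psize mu + k := by
  have hfin : ∀ p : Partition, (Function.support p.parts).Finite := fun p => by
    obtain ⟨N, hN⟩ := p.fin_supp
    exact (Set.finite_Iio N).subset fun t ht => not_le.mp fun hNt => ht (hN t hNt)
  calc psize la = ∑ᶠ t, (mu.parts t + (la.parts t - mu.parts t)) :=
        finsum_congr fun t => by have := h.1 t; omega
    _ = psize mu + k := by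
      rw [finsum_add_distrib (hfin mu) ((hfin la).subset fun t ht hla => ht (by simp [hla])),
        h.2.1]
      rfl

def cellAdj (la mu : Partition) (a b : ℕ × ℕ) : Prop :=
  a ∈ cells la mu ∧ b ∈ cells la mu ∧ Adj a b

instance (la mu : Partition) : Std.Symm (cellAdj la mu) where
  symm _ _ := fun ⟨ha, hb, hab⟩ => ⟨hb, ha, by unfold Adj at *; omega⟩

theorem reflTransGen_cellAdj_of_row {la mu : Partition} {t c c' : ℕ} (hc : (t, c) ∈ cells la mu)
    (hc' : (t, c') ∈ cells la mu) : Relation.ReflTransGen (cellAdj la mu) (t, c) (t, c') := by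
  wlog h : c ≤ c' generalizing c c'
  · exact Std.Symm.symm _ _ (this hc' hc (by omega))
  obtain ⟨n, rfl⟩ := Nat.exists_eq_add_of_le h
  induction n with
  | zero => rfl
  | succ n ih =>
    have hmid : (t, c + n) ∈ cells la mu :=
      ⟨hc.1.trans (Nat.le_add_right c n), (Nat.lt_add_one _).trans hc'.2⟩
    exact (ih hmid (by omega)).tail ⟨hmid, hc', Or.inl ⟨rfl, Or.inl rfl⟩⟩

/-- Consecutive rows `s, s + 1` of a skew shape share the column `μ_s` as soon as
`μ_s < λ_{s+1}`. -/
theorem reflTransGen_cellAdj_of_overlap {la mu : Partition} {t t' c c' : ℕ}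
    (hc : (t, c) ∈ cells la mu) (hc' : (t', c') ∈ cells la mu) (htt' : t ≤ t')
    (hoverlap : ∀ s, t ≤ s → s < t' → mu.parts s < la.parts (s + 1)) :
    Relation.ReflTransGen (cellAdj la mu) (t, c) (t', c') := by
  obtain ⟨n, rfl⟩ := Nat.exists_eq_add_of_le htt'
  induction n generalizing t c with
  | zero => exact reflTransGen_cellAdj_of_row hc hc'
  | succ n ih =>
    have hs := hoverlap t le_rfl (by omega)
    have h1 : (t, mu.parts t) ∈ cells la mu := ⟨le_rfl, hs.trans_le (la.antitone t.le_succ)⟩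
    have h2 : (t + 1, mu.parts t) ∈ cells la mu := ⟨mu.antitone t.le_succ, hs⟩
    rw [show t + (n + 1) = t + 1 + n by omega] at hc' ⊢
    exact (reflTransGen_cellAdj_of_row hc h1).trans (.head ⟨h1, h2, Or.inr ⟨rfl, Or.inl rfl⟩⟩
      (ih h2 hc' (by omega) fun s hs hs' => hoverlap s (by omega) (by omega)))

theorem not_square_of_parts_succ_le {la mu : Partition}
    (h : ∀ t, la.parts (t + 1) ≤ mu.parts t + 1) :
    ¬ ∃ i j : ℕ, (i, j) ∈ cells la mu ∧ (i+1, j) ∈ cells la mu ∧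
      (i, j+1) ∈ cells la mu ∧ (i+1, j+1) ∈ cells la mu := by
  rintro ⟨i, j, ⟨h1, -⟩, -, -, ⟨-, h4⟩⟩
  have := h i
  simp only at h1 h4
  omega

theorem reflTransGen_cellAdj_of_rows {la mu : Partition} {i₀ j₀ : ℕ}
    (hrows : ∀ c ∈ cells la mu, i₀ ≤ c.1 ∧ c.1 ≤ j₀)
    (hoverlap : ∀ s, i₀ ≤ s → s < j₀ → mu.parts s < la.parts (s + 1)) :
    ∀ c ∈ cells la mu, ∀ c' ∈ cells la mu, Relation.ReflTransGen (cellAdj la mu) c c' := by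
  rintro ⟨t, c⟩ hc ⟨t', c'⟩ hc'
  have ht := hrows _ hc
  have ht' := hrows _ hc'
  rcases le_total t t' with h | h
  · exact reflTransGen_cellAdj_of_overlap hc hc' h fun s hs hs' => hoverlap s (by omega) (by omega)
  · exact Std.Symm.symm _ _
      (reflTransGen_cellAdj_of_overlap hc' hc h fun s hs hs' => hoverlap s (by omega) (by omega))

namespace Partition

variable (l : Partition) {i₀ j₀ d : ℕ}

/-- Removes from `l` the border strip that occupies rows `i₀, …, j₀` and leaves `d` cells in
row `j₀`. -/
def removeHook (i₀ j₀ d : ℕ) (hd : l.parts (j₀ + 1) ≤ d) (hd' : d < l.parts j₀) : Partition where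
  parts t := if t < i₀ ∨ j₀ < t then l.parts t else if t = j₀ then d else l.parts (t + 1) - 1
  antitone := antitone_nat_of_succ_le fun t => by
    have := l.antitone (Nat.le_add_right t 1)
    have := l.antitone (Nat.le_add_right (t + 1) 1)
    split_ifs <;> (try subst_vars) <;> omega
  fin_supp := by
    obtain ⟨N, hN⟩ := l.fin_supp
    exact ⟨max N (j₀ + 1), fun t ht => by rw [if_pos (by omega), hN t (by omega)]⟩

variable {l} (hd : l.parts (j₀ + 1) ≤ d) (hd' : d < l.parts j₀)

theorem removeHook_parts (t : ℕ) : (l.removeHook i₀ j₀ d hd hd').parts t =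
    if t < i₀ ∨ j₀ < t then l.parts t else if t = j₀ then d else l.parts (t + 1) - 1 := rfl

theorem removeHook_parts_le (t : ℕ) : (l.removeHook i₀ j₀ d hd hd').parts t ≤ l.parts t := by
  have := l.antitone (Nat.le_add_right t 1)
  rw [removeHook_parts]
  split_ifs <;> (try subst_vars) <;> omega

theorem removeHook_bead_self (hij : i₀ ≤ j₀) :
    (l.removeHook i₀ j₀ d hd hd').bead j₀ = d - j₀ - 1 := by
  rw [bead, removeHook_parts, if_neg (by omega), if_pos rfl]

theorem beads_subset_insert_beads_removeHook :
    l.beads ⊆ insert (l.bead i₀) (l.removeHook i₀ j₀ d hd hd').beads := by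
  rintro _ ⟨t, rfl⟩
  rcases lt_trichotomy t i₀ with h | rfl | h
  · exact Or.inr ⟨t, by rw [bead, bead, removeHook_parts, if_pos (Or.inl h)]⟩
  · exact Or.inl rfl
  · rcases le_or_gt t j₀ with h' | h'
    · refine Or.inr ⟨t - 1, ?_⟩
      have := l.antitone h'
      rw [bead, bead, removeHook_parts, if_neg (by omega), if_neg (by omega),
        Nat.sub_add_cancel (by omega)]
      omega
    · exact Or.inr ⟨t, by rw [bead, bead, removeHook_parts, if_pos (Or.inr h')]⟩

theorem finsum_sub_removeHook (hij : i₀ ≤ j₀) :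
    ((∑ᶠ t, (l.parts t - (l.removeHook i₀ j₀ d hd hd').parts t) : ℕ) : ℤ) =
      l.parts i₀ - i₀ + j₀ - d := by
  rw [finsum_eq_sum_of_support_subset (s := Finset.Icc i₀ j₀)]
  · rw [Nat.cast_sum, ← Finset.Ico_add_one_right_eq_Icc, Finset.sum_Ico_succ_top hij,
      Finset.sum_congr rfl
        (g := fun t => -((l.parts (t + 1) : ℤ) - (t + 1 : ℕ)) - -(l.parts t - t)),
      Finset.sum_Ico_sub (fun t => -((l.parts t : ℤ) - t)) hij]
    · rw [removeHook_parts, if_neg (by omega), if_pos rfl]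
      omega
    · intro t ht
      rw [Finset.mem_Ico] at ht
      have := l.antitone (Nat.le_add_right t 1)
      have : l.parts j₀ ≤ l.parts (t + 1) := l.antitone ht.2
      rw [removeHook_parts, if_neg (by omega), if_neg (by omega)]
      omega
  · intro t ht
    rw [Function.mem_support, removeHook_parts] at ht
    rw [Finset.coe_Icc, Set.mem_Icc]
    by_contra hout
    rw [if_pos (by omega), Nat.sub_self] at ht
    exact ht rfl

theorem isRimHook_removeHook {k : ℕ} (hij : i₀ ≤ j₀) (hk : l.bead i₀ - k = d - j₀ - 1) :
    IsRimHook l (l.removeHook i₀ j₀ d hd hd') k := by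
  have hrows : ∀ c ∈ cells l (l.removeHook i₀ j₀ d hd hd'), i₀ ≤ c.1 ∧ c.1 ≤ j₀ := by
    rintro ⟨t, c⟩ ⟨h1, h2⟩
    simp only [removeHook_parts] at h1 h2 ⊢
    by_contra hout
    rw [if_pos (by omega)] at h1
    omega
  refine ⟨removeHook_parts_le hd hd', ?_, ?_, not_square_of_parts_succ_le fun t => ?_⟩
  · have := finsum_sub_removeHook hd hd' hij
    simp only [bead] at hk
    omega
  · refine reflTransGen_cellAdj_of_rows hrows fun s hs hs' => ?_
    have : l.parts j₀ ≤ l.parts (s + 1) := l.antitone hs'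
    rw [removeHook_parts, if_neg (by omega), if_neg (by omega)]
    omega
  · have := l.antitone (Nat.le_add_right t 1)
    rw [removeHook_parts]
    split_ifs <;> (try subst_vars) <;> omega

theorem exists_bead_succ_lt_lt_bead (l : Partition) {i : ℕ} {c : ℤ} (hc : c < l.bead i)
    (hcB : c ∉ l.beads) : ∃ j, i ≤ j ∧ l.bead (j + 1) < c ∧ c < l.bead j := by
  have hex : ∃ j, l.bead j < c :=
    ⟨(l.parts 0 - c).toNat, by have := l.bead_le (l.parts 0 - c).toNat; omega⟩
  have hspec := Nat.find_spec hex
  have hi : i < Nat.find hex := by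
    by_contra h
    have := l.strictAnti_bead.antitone (not_lt.mp h)
    omega
  refine ⟨Nat.find hex - 1, by omega, by rwa [Nat.sub_add_cancel (by omega)], ?_⟩
  have := Nat.find_min hex (by omega : Nat.find hex - 1 < Nat.find hex)
  exact lt_of_le_of_ne (not_lt.mp this) fun h => hcB ⟨_, h.symm⟩

theorem exists_isRimHook_of_sub_notMem_beads {l : Partition} {k : ℕ} {b : ℤ} (hb : b ∈ l.beads)
    (hgap : b - k ∉ l.beads) :
    ∃ μ, IsRimHook l μ k ∧ l.beads ⊆ insert b μ.beads ∧ b - k ∈ μ.beads := by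
  obtain ⟨i₀, rfl⟩ := hb
  have hk : 0 < k := Nat.pos_of_ne_zero fun hk => hgap ⟨i₀, by simp [hk]⟩
  set c := l.bead i₀ - k with hc
  obtain ⟨j₀, hij, hj₀, hj₀'⟩ := l.exists_bead_succ_lt_lt_bead (by omega : c < l.bead i₀) hgap
  simp only [bead] at hj₀ hj₀'
  have hd : l.parts (j₀ + 1) ≤ (c + j₀ + 1).toNat := by omega
  have hd' : (c + j₀ + 1).toNat < l.parts j₀ := by omega
  have hμ : (l.removeHook i₀ j₀ _ hd hd').bead j₀ = c := by
    rw [removeHook_bead_self hd hd' hij]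
    omega
  exact ⟨_, isRimHook_removeHook hd hd' hij (by omega),
    beads_subset_insert_beads_removeHook hd hd', ⟨j₀, hμ⟩⟩

end Partition

theorem reflTransGen_isRimHook_ofList {k : ℕ} (l : Partition) (hk : l.parts 0 < k)
    (hgaps : GapsIncongruent k l.beads) :
    Relation.ReflTransGen (fun a b => IsRimHook a b k) l (ofList [psize l % k]) := by
  induction hn : psize l using Nat.strong_induction_on generalizing l with
  | _ n ih =>
    rcases em (∃ b ∈ l.beads, b - k ∉ l.beads) with ⟨b, hb, hgap⟩ | hcore
    · have hbk : b ≤ k - 2 := by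
        obtain ⟨i, rfl⟩ := hb
        have := l.bead_le i
        omega
      obtain ⟨μ, hμ, hsub, hbμ⟩ := Partition.exists_isRimHook_of_sub_notMem_beads hb hgap
      have hsize := hμ.psize_eq
      refine .head hμ ?_
      rw [← hn, hsize, Nat.add_mod_right]
      exact ih _ (by omega) μ ((hμ.1 0).trans_lt hk)
        (hgaps.of_subset_insert (by rwa [sub_add_cancel]) hbμ hgap (by omega)) rfl
    · have h1 := parts_one_eq_zero_of_sub_mem_beads (by omega) hgaps fun b hb =>
        by_contra fun hgap => hcore ⟨b, hb, hgap⟩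
      rw [← hn, psize_eq_parts_zero h1, Nat.mod_eq_of_lt hk, ← eq_ofList_singleton h1]

/-- if `λ ⊢ m` and `pet_k(λ) ≠ 0`, then `λ_1 < k` and the
`k`-core of `λ` is the one-part partition `(m mod k)` (the empty partition
when `m mod k = 0`). -/
theorem core_of_nonzero_pet (k m : ℕ) (hk : 1 ≤ k) (l : Partition)
    (hm : psize l = m) (h : pet k l ≠ 0) :
    l.parts 0 < k ∧ IsCore k l (ofList [m % k]) := by
  have h0 := parts_zero_lt_of_pet_ne_zero hk h
  subst hm
  refine ⟨h0, reflTransGen_isRimHook_ofList l h0 (gapsIncongruent_of_pet_ne_zero h0 h),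
    fun μ hμ => ?_⟩
  have := hμ.psize_eq
  rw [psize_ofList_singleton] at this
  have := Nat.mod_lt (psize l) (by omega : k > 0)
  omega

end Petrie
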